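/- Let B⁽⁰⁾,…,B⁽ᵏ⁾ be operator-collections and μ > 0. For sequences of words 𝐒₀,…,𝐒_k satisfying the connectivity condition S_{i+1} ∩ (S₀∪…∪S_i) ≠ ∅ for all i, and for which the products 𝐒'₀ = 𝐒₀, 𝐒'_i = 𝐒_i𝐒'_{i−1} are all defined, set the weights z(𝐒₀,…,𝐒_k) = |S'_k|^{−(k+1)}·∏_{i=0}^k b⁽ⁱ⁾_{𝐒_i} with b⁽ⁱ⁾_𝐒 = ||B⁽ⁱ⁾_𝐒||·e^{μ|S|}, define z(k) = sup_α Σ_{sequences with α∈S'_k} z(𝐒₀,…,𝐒_k), z_{k,j} = sup_α Σ_{sequences with α∈S_j} z(𝐒₀,…,𝐒_k), and z(−1) = 1. Then for all j = 0,…,k, z_{k,j} ≤ z(j−1)·∏_{t=j}^k ||B⁽ᵗ⁾||_μ. -/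

import Mathlib

open scoped BigOperators
set_option linter.unusedSectionVars false
open Matrix

noncomputable section

namespace QLDPC

open scoped Classical

/-- The four Pauli matrices 1, X, Y, Z. -/
def pauliMat : Fin 4 → Matrix (Fin 2) (Fin 2) ℂ
  | 0 => 1
  | 1 => !![0, 1; 1, 0]
  | 2 => !![0, -Complex.I; Complex.I, 0]
  | 3 => !![1, 0; 0, -1]

variable {Λ E : Type}

/-- Operators on the Hilbert space (ℂ²)^{⊗Λ}. -/
abbrev Op (Λ : Type) [Fintype Λ] [DecidableEq Λ] := Matrix (Λ → Fin 2) (Λ → Fin 2) ℂ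

/-- The operator of a Pauli string `p : Λ → Fin 4`. -/
def pauliOp [Fintype Λ] [DecidableEq Λ] (p : Λ → Fin 4) : Op Λ :=
  fun f g => ∏ x, pauliMat (p x) (f x) (g x)

/-- Qubit support of a Pauli string. -/
def psupp [Fintype Λ] (p : Λ → Fin 4) : Finset Λ :=
  Finset.univ.filter fun x => p x ≠ 0

/-- The operator norm (largest singular value). -/
def opNorm [Fintype Λ] [DecidableEq Λ] (A : Op Λ) : ℝ :=
  ‖Matrix.toEuclideanCLM (𝕜 := ℂ) A‖

/-- Coefficient of the Pauli string `p` in the Pauli-basis expansion of `A`. -/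
def pauliCoeff [Fintype Λ] [DecidableEq Λ] (A : Op Λ) (p : Λ → Fin 4) : ℂ :=
  Matrix.trace (pauliOp p * A) / ((2 : ℂ) ^ Fintype.card Λ)

/-- Qubit support of a general operator, via its Pauli expansion. -/
def opSupp [Fintype Λ] [DecidableEq Λ] (A : Op Λ) : Set Λ :=
  {x | ∃ p : Λ → Fin 4, pauliCoeff A p ≠ 0 ∧ p x ≠ 0}

/-- The data of a family of stabilizer checks: each check is a signed Pauli string. -/
structure Checks (Λ E : Type) where
  str : E → Λ → Fin 4
  sgn : E → Bool

variable [Fintype Λ] [DecidableEq Λ] [Fintype E]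

/-- The operator of check α. -/
def checkOp (K : Checks Λ E) (α : E) : Op Λ :=
  (if K.sgn α then (-1 : ℂ) else 1) • pauliOp (K.str α)

/-- G_α = (1 + C_α)/2. -/
def Gop (K : Checks Λ E) (α : E) : Op Λ := (2⁻¹ : ℂ) • (1 + checkOp K α)

/-- E_α = (1 - C_α)/2. -/
def Eop (K : Checks Λ E) (α : E) : Op Λ := (2⁻¹ : ℂ) • (1 - checkOp K α)

/-- The stabilizer Hamiltonian H₀ = Σ_α E_α. -/
def H0 (K : Checks Λ E) : Op Λ := ∑ α, Eop K α

/-- The stabilizer group 𝒢 generated by the checks (as a submonoid; each check squares to 1). -/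
def stab (K : Checks Λ E) : Submonoid (Op Λ) :=
  Submonoid.closure (Set.range (checkOp K))

/-- All checks pairwise commute (𝒢 abelian). -/
def CommChecks (K : Checks Λ E) : Prop := ∀ α β, Commute (checkOp K α) (checkOp K β)

/-- Check support of a qubit. -/
def suppC (K : Checks Λ E) (x : Λ) : Finset E :=
  Finset.univ.filter fun α => x ∈ psupp (K.str α)

/-- The qubit interaction graph. -/
def qubitGraph (K : Checks Λ E) : SimpleGraph Λ :=
  SimpleGraph.fromRel fun x y => ∃ α, x ∈ psupp (K.str α) ∧ y ∈ psupp (K.str α)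

/-- The check interaction graph. -/
def checkGraph (K : Checks Λ E) : SimpleGraph E :=
  SimpleGraph.fromRel fun α β => (psupp (K.str α) ∩ psupp (K.str β)).Nonempty

/-- `y` lies in the (closed) ball of radius `r` around `x` in the graph `G`. -/
def inBall {V : Type} (G : SimpleGraph V) (x y : V) (r : ℝ) : Prop :=
  G.Reachable x y ∧ (G.dist x y : ℝ) ≤ r

/-- Ball in the qubit graph. -/
def ballQ (K : Checks Λ E) (x : Λ) (r : ℝ) : Finset Λ :=
  Finset.univ.filter fun y => inBall (qubitGraph K) x y r

/-- Ball in the check graph. -/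
def ballC (K : Checks Λ E) (α : E) (r : ℝ) : Finset E :=
  Finset.univ.filter fun β => inBall (checkGraph K) α β r

/-- Ball of radius `r` around a set of checks. -/
def ballCS (K : Checks Λ E) (S : Finset E) (r : ℝ) : Finset E :=
  Finset.univ.filter fun β => ∃ α ∈ S, inBall (checkGraph K) α β r

/-- Growth of balls condition: |B_r| ≤ e^{κ r} on both graphs. -/
def BallGrowth (K : Checks Λ E) (κ : ℝ) : Prop :=
  (∀ (x : Λ) (r : ℝ), ((ballQ K x r).card : ℝ) ≤ Real.exp (κ * r)) ∧
  (∀ (α : E) (r : ℝ), ((ballC K α r).card : ℝ) ≤ Real.exp (κ * r))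

/-- A finite set is connected in a graph if the induced subgraph is connected. -/
def ConnIn {V : Type} (G : SimpleGraph V) (S : Finset V) : Prop :=
  (G.induce (S : Set V)).Connected

/-- Qubit support of a set of checks. -/
def suppSet (K : Checks Λ E) (S : Finset E) : Set Λ :=
  ↑(S.biUnion fun α => psupp (K.str α))

variable [LinearOrder E]

/-- Ordered product of operators over a finite set of check labels. -/
def ordProd (S : Finset E) (f : E → Op Λ) : Op Λ :=
  ((S.sort (· ≤ ·)).map f).prod

/-- The codespace projector P = ∏_α G_α (for commuting checks). -/
def Pmat (K : Checks Λ E) : Op Λ := ordProd Finset.univ (Gop K)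

/-- The code distance: minimal support of a Pauli string p with P p P not proportional to P. -/
def codeDist (K : Checks Λ E) : ℕ :=
  sInf ((fun p => (psupp p).card) ''
    {p : Λ → Fin 4 | ¬∃ cc : ℂ, Pmat K * pauliOp p * Pmat K = cc • Pmat K})

/-- TQO-I: Pauli strings of weight below the code distance commuting with 𝒢 belong to 𝒢. -/
def TQO1 (K : Checks Λ E) : Prop :=
  ∀ p : Λ → Fin 4, (psupp p).card < codeDist K →
    (∀ g ∈ stab K, Commute (pauliOp p) g) → pauliOp p ∈ stab K

/-- TQO-II: group elements locally supported on a small connected check set S are generated by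
checks within distance ℓ|S| of S. -/
def TQO2 (K : Checks Λ E) (ℓ dtil : ℝ) : Prop :=
  ∀ S : Finset E, ConnIn (checkGraph K) S → (S.card : ℝ) < dtil →
    ∀ g ∈ stab K, opSupp (g : Op Λ) ⊆ suppSet K S →
      (g : Op Λ) ∈ Submonoid.closure (checkOp K '' {α | ∃ β ∈ S, inBall (checkGraph K) β α (ℓ * S.card)})

/-! ### Words and operator-collections -/

/-- A word: a quadruple of pairwise disjoint subsets of the checks,
labelled (+, -, excited, ground). -/
structure Word (E : Type) where
  p : Finset E
  m : Finset E
  e : Finset E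
  g : Finset E
  hpm : Disjoint p m
  hpe : Disjoint p e
  hpg : Disjoint p g
  hme : Disjoint m e
  hmg : Disjoint m g
  heg : Disjoint e g

/-- The underlying set of the word. -/
def Word.S [DecidableEq E] (w : Word E) : Finset E := w.p ∪ w.m ∪ w.e ∪ w.g

instance : Fintype (Word E) := by
  classical
  exact Fintype.ofInjective (fun w : Word E => (w.p, w.m, w.e, w.g))
    (by
      rintro ⟨a1, a2, a3, a4, _, _, _, _, _, _⟩ ⟨b1, b2, b3, b4, _, _, _, _, _, _⟩ h
      simp only [Prod.mk.injEq] at h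
      obtain ⟨h1, h2, h3, h4⟩ := h
      subst h1; subst h2; subst h3; subst h4; rfl)

/-- A word is a ghost if all components except the ground one are empty. -/
def IsGhost (w : Word E) : Prop := w.p = ∅ ∧ w.m = ∅ ∧ w.e = ∅

/-- The empty word. -/
def emptyWord (E : Type) : Word E :=
  ⟨∅, ∅, ∅, ∅, by simp, by simp, by simp, by simp, by simp, by simp⟩

/-- Left projector assignment of a word. -/
def leftP (K : Checks Λ E) (w : Word E) (α : E) : Op Λ :=
  if α ∈ w.m ∪ w.g then Gop K α else Eop K α

/-- Right projector assignment of a word. -/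
def rightP (K : Checks Λ E) (w : Word E) (α : E) : Op Λ :=
  if α ∈ w.p ∪ w.g then Gop K α else Eop K α

/-- The class 𝒳_𝐒 of operators compatible with the word 𝐒. -/
def memClass (K : Checks Λ E) (w : Word E) (X : Op Λ) : Prop :=
  ∃ Y : Op Λ,
    (∀ α : E, (opSupp Y ∩ (psupp (K.str α) : Set Λ)).Nonempty → α ∈ w.S) ∧
    X = ordProd w.S (leftP K w) * Y * ordProd w.S (rightP K w)

/-- An operator-collection: a family (O_𝐒)_𝐒 with O_𝐒 ∈ 𝒳_𝐒. -/
def IsColl (K : Checks Λ E) (O : Word E → Op Λ) : Prop :=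
  ∀ w, memClass K w (O w)

/-- The intensive word norm ‖O‖_μ of an operator-collection. -/
def wordNorm (μ : ℝ) (O : Word E → Op Λ) : ℝ :=
  ⨆ α : E, ∑ w : Word E, (if α ∈ w.S then opNorm (O w) * Real.exp (μ * w.S.card) else 0)

/-! ### The multiplication table of words -/

/-- Labels of a check in a word: none, ground, excited, raising, lowering. -/
inductive Lbl | N | G | E | P | M
deriving DecidableEq

/-- The multiplication table of labels; `none` encodes that the product vanishes. -/
def lblMul : Lbl → Lbl → Option Lbl
  | .N, x => some x
  | .G, .N => some .G
  | .G, .G => some .G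
  | .G, .E => none
  | .G, .P => none
  | .G, .M => some .M
  | .E, .N => some .E
  | .E, .G => none
  | .E, .E => some .E
  | .E, .P => some .P
  | .E, .M => none
  | .P, .N => some .P
  | .P, .G => some .P
  | .P, .E => none
  | .P, .P => none
  | .P, .M => some .E
  | .M, .N => some .M
  | .M, .G => none
  | .M, .E => some .M
  | .M, .P => some .G
  | .M, .M => none

/-- The label of a check in a word. -/
def Word.lbl [DecidableEq E] (w : Word E) (α : E) : Lbl :=
  if α ∈ w.p then .P else if α ∈ w.m then .M else if α ∈ w.e then .E
  else if α ∈ w.g then .G else .N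

/-- The product of two words is defined (the corresponding operator product does not vanish
identically by the multiplication table). -/
def MulDef (w' w : Word E) : Prop :=
  ∀ α : E, lblMul (w'.lbl α) (w.lbl α) ≠ none

private lemma disj_aux {f : E → Option Lbl} {a b : Lbl} (hab : a ≠ b) :
    Disjoint (Finset.univ.filter fun α => f α = some a)
      (Finset.univ.filter fun α => f α = some b) := by
  rw [Finset.disjoint_left]
  intro x hx hy
  simp only [Finset.mem_filter] at hx hy
  exact hab (Option.some.inj (hx.2.symm.trans hy.2))

/-- The product word 𝐒'𝐒 (meaningful when `MulDef w' w`). -/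
def wmul (w' w : Word E) : Word E where
  p := Finset.univ.filter fun α => lblMul (w'.lbl α) (w.lbl α) = some .P
  m := Finset.univ.filter fun α => lblMul (w'.lbl α) (w.lbl α) = some .M
  e := Finset.univ.filter fun α => lblMul (w'.lbl α) (w.lbl α) = some .E
  g := Finset.univ.filter fun α => lblMul (w'.lbl α) (w.lbl α) = some .G
  hpm := disj_aux (by decide)
  hpe := disj_aux (by decide)
  hpg := disj_aux (by decide)
  hme := disj_aux (by decide)
  hmg := disj_aux (by decide)
  heg := disj_aux (by decide)

/-- The commutator of two operator-collections. -/
def collComm (O O' : Word E → Op Λ) : Word E → Op Λ := fun w =>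
  ∑ w1 : Word E, ∑ w2 : Word E,
    if MulDef w1 w2 ∧ wmul w1 w2 = w ∧ (w1.S ∩ w2.S).Nonempty
    then O w1 * O' w2 - O' w1 * O w2 else 0

/-- Iterated adjoint action ad_{B_k}⋯ad_{B_1}(B_0) of operator-collections. -/
def chainAd (B : ℕ → Word E → Op Λ) : ℕ → Word E → Op Λ
  | 0 => B 0
  | k + 1 => collComm (B (k + 1)) (chainAd B k)

/-- exp(i ad_A)(B) for operator-collections, defined componentwise. -/
def expAd (A B : Word E → Op Λ) : Word E → Op Λ := fun w =>
  ∑' k : ℕ, ((Complex.I ^ k / (k.factorial : ℂ)) • ((fun C => collComm A C)^[k] B) w)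

/-! ### Sequences of words -/

/-- The running products 𝐒'_i of a sequence of words. -/
def sprime (σ : ℕ → Word E) : ℕ → Word E
  | 0 => σ 0
  | i + 1 => wmul (σ (i + 1)) (sprime σ i)

/-- The running products with ghost words skipped. -/
def sprimeG (σ : ℕ → Word E) : ℕ → Word E
  | 0 => σ 0
  | i + 1 => if IsGhost (σ (i + 1)) then sprimeG σ i else wmul (σ (i + 1)) (sprimeG σ i)

/-- Extend a finite sequence of words by the empty word. -/
def extend {k : ℕ} (σ : Fin (k + 1) → Word E) : ℕ → Word E :=
  fun i => if h : i < k + 1 then σ ⟨i, h⟩ else emptyWord E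

/-! ### Pauli norms -/

/-- Size of a minimal connected set of qubits containing the support of `p`. -/
def mSize (K : Checks Λ E) (p : Λ → Fin 4) : ℕ :=
  sInf {n | ∃ T : Finset Λ, ConnIn (qubitGraph K) T ∧ psupp p ⊆ T ∧ T.card = n}

/-- The intensive Pauli norm of an operator given by Pauli coefficients `c`. -/
def pauliNormC (K : Checks Λ E) (μ : ℝ) (c : (Λ → Fin 4) → ℂ) : ℝ :=
  ⨆ x : Λ, ∑ p : Λ → Fin 4, (if p x ≠ 0 then ‖c p‖ * Real.exp (μ * (mSize K p : ℝ)) else 0)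

/-- The intensive Pauli norm of an operator. -/
def pauliNormOp (K : Checks Λ E) (μ : ℝ) (A : Op Λ) : ℝ :=
  pauliNormC K μ (pauliCoeff A)

/-- Diameter of the qubit graph. -/
def diam (K : Checks Λ E) : ℕ :=
  Finset.univ.sup fun pr : Λ × Λ => (qubitGraph K).dist pr.1 pr.2

/-- The spectral projector of a Hermitian matrix onto the eigenvalues in [-δ, δ]. -/
def spectralProjLE {n : Type} [Fintype n] [DecidableEq n] {A : Matrix n n ℂ}
    (hA : A.IsHermitian) (δ : ℝ) : Matrix n n ℂ :=
  (hA.eigenvectorUnitary : Matrix n n ℂ) *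
    Matrix.diagonal (fun i => if |hA.eigenvalues i| ≤ δ then (1 : ℂ) else 0) *
    star (hA.eigenvectorUnitary : Matrix n n ℂ)


section Stmt13

variable {Λ E : Type} [Fintype Λ] [DecidableEq Λ] [Fintype E] [LinearOrder E]

/-- The connectivity/definedness condition on a sequence of words: each `S_{i+1}` meets
`S₀ ∪ … ∪ S_i` and all running products are defined. -/
def goodSeq (σ : ℕ → Word E) (k : ℕ) : Prop :=
  (∀ i < k, MulDef (σ (i + 1)) (sprime σ i)) ∧
  (∀ i < k, ((σ (i + 1)).S ∩ (Finset.range (i + 1)).biUnion fun j => (σ j).S).Nonempty)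

/-- The weight `z(𝐒₀,…,𝐒_k) = |S'_k|^{−(k+1)} ∏ᵢ bⁱ_{𝐒ᵢ}` with
`bⁱ_𝐒 = ‖Bⁱ_𝐒‖ e^{μ|S|}`. -/
def zw13 (B : ℕ → Word E → Op Λ) (μ : ℝ) (σ : ℕ → Word E) (k : ℕ) : ℝ :=
  (1 / ((sprime σ k).S.card : ℝ)) ^ (k + 1) *
    ∏ i ∈ Finset.range (k + 1), (opNorm (B i (σ i)) * Real.exp (μ * ((σ i).S.card : ℝ)))

/-- `z(k)`: sup over checks `α` of the sum of weights over good sequences with `α ∈ S'_k`. -/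
def z13 (B : ℕ → Word E → Op Λ) (μ : ℝ) (k : ℕ) : ℝ :=
  ⨆ α : E, ∑ σ : Fin (k + 1) → Word E,
    (if goodSeq (extend σ) k ∧ α ∈ (sprime (extend σ) k).S
      then zw13 B μ (extend σ) k else 0)

/-- `z_{k,j}`: same as `z(k)` but anchored by the condition `α ∈ S_j`. -/
def z13kj (B : ℕ → Word E → Op Λ) (μ : ℝ) (k j : ℕ) : ℝ :=
  ⨆ α : E, ∑ σ : Fin (k + 1) → Word E,
    (if goodSeq (extend σ) k ∧ α ∈ (extend σ j).S
      then zw13 B μ (extend σ) k else 0)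

/-! Induction on `k`. Appending a word `w` to a good sequence `τ` of length `k + 1` multiplies its
weight by at most `b(w) / |w ∪ S'_k|`, and `w` has to meet `S'_k`. Bounding `|w ∪ S'_k|` below by
`|S'_k|`, the sum over `w` meeting `S'_k` is at most `|S'_k|` times `‖B⁽ᵏ⁺¹⁾‖_μ`, so
`z_{k+1,j} ≤ z_{k,j} ‖B⁽ᵏ⁺¹⁾‖_μ`. In the base case `j = k + 1` one bounds `|w ∪ S'_k|` below by
`|w|` instead, and the sum over `τ` with `S'_k` meeting `w` is at most `|w|` times `z(k)`. -/

lemma Word.mem_S_iff_lbl_ne (w : Word E) (α : E) : α ∈ w.S ↔ w.lbl α ≠ .N := by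
  simp only [Word.S, Finset.mem_union, Word.lbl]
  split_ifs <;> simp_all

lemma wmul_S {w' w : Word E} (h : MulDef w' w) : (wmul w' w).S = w'.S ∪ w.S := by
  ext α
  rw [Finset.mem_union, Word.mem_S_iff_lbl_ne, Word.mem_S_iff_lbl_ne, Word.mem_S_iff_lbl_ne,
    Word.lbl]
  simp only [wmul, Finset.mem_filter, Finset.mem_univ, true_and]
  have hα := h α
  revert hα
  generalize w'.lbl α = a, w.lbl α = b
  cases a <;> cases b <;> decide

lemma sprime_S {σ : ℕ → Word E} {k : ℕ} (h : ∀ i < k, MulDef (σ (i + 1)) (sprime σ i)) :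
    (sprime σ k).S = (Finset.range (k + 1)).biUnion fun i => (σ i).S := by
  induction k with
  | zero => simp [sprime]
  | succ k ih =>
    rw [Finset.range_add_one, Finset.biUnion_insert, sprime, wmul_S (h k k.lt_add_one),
      ih fun i hi => h i (hi.trans k.lt_add_one)]

lemma goodSeq_succ_iff {σ : ℕ → Word E} {k : ℕ} :
    goodSeq σ (k + 1) ↔ goodSeq σ k ∧ MulDef (σ (k + 1)) (sprime σ k) ∧
      ((σ (k + 1)).S ∩ (sprime σ k).S).Nonempty := by
  simp only [goodSeq, Nat.forall_lt_succ_right]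
  constructor
  · rintro ⟨⟨hmul, hmul_k⟩, hmeet, hmeet_k⟩
    exact ⟨⟨hmul, hmeet⟩, hmul_k, by rwa [sprime_S hmul]⟩
  · rintro ⟨⟨hmul, hmeet⟩, hmul_k, hmeet_k⟩
    exact ⟨⟨hmul, hmul_k⟩, hmeet, by rwa [← sprime_S hmul]⟩

section Congr

variable {σ σ' : ℕ → Word E} {k : ℕ}

lemma sprime_congr (h : ∀ i ≤ k, σ i = σ' i) : sprime σ k = sprime σ' k := by
  induction k with
  | zero => exact h 0 le_rfl
  | succ k ih => rw [sprime, sprime, h (k + 1) le_rfl, ih fun i hi => h i (hi.trans k.le_succ)]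

lemma goodSeq_congr (h : ∀ i ≤ k, σ i = σ' i) : goodSeq σ k ↔ goodSeq σ' k := by
  induction k with
  | zero => simp [goodSeq]
  | succ k ih =>
    have h_le : ∀ i ≤ k, σ i = σ' i := fun i hi => h i (hi.trans k.le_succ)
    rw [goodSeq_succ_iff, goodSeq_succ_iff, ih h_le, sprime_congr h_le, h (k + 1) le_rfl]

lemma zw13_congr (B : ℕ → Word E → Op Λ) (μ : ℝ) (h : ∀ i ≤ k, σ i = σ' i) :
    zw13 B μ σ k = zw13 B μ σ' k := by
  rw [zw13, zw13, sprime_congr h,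
    Finset.prod_congr rfl fun i hi => by rw [h i (Nat.lt_succ_iff.1 (Finset.mem_range.1 hi))]]

end Congr

section Extend

variable {k : ℕ} (τ : Fin (k + 1) → Word E) (w : Word E)

lemma extend_snoc_of_le {i : ℕ} (hi : i ≤ k) : extend (Fin.snoc τ w) i = extend τ i := by
  have hi' : i < k + 1 := Nat.lt_succ_of_le hi
  simp only [extend, dif_pos hi', dif_pos (hi'.trans k.succ.lt_add_one)]
  exact Fin.snoc_castSucc (α := fun _ => Word E) (i := ⟨i, hi'⟩) ..

lemma extend_snoc_last : extend (Fin.snoc τ w) (k + 1) = w := by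
  simp only [extend, dif_pos (k + 1).lt_add_one]
  exact Fin.snoc_last (α := fun _ => Word E) ..

lemma goodSeq_extend_snoc_iff :
    goodSeq (extend (Fin.snoc τ w)) (k + 1) ↔ goodSeq (extend τ) k ∧
      MulDef w (sprime (extend τ) k) ∧ (w.S ∩ (sprime (extend τ) k).S).Nonempty := by
  rw [goodSeq_succ_iff, goodSeq_congr fun _ => extend_snoc_of_le τ w,
    sprime_congr fun _ => extend_snoc_of_le τ w, extend_snoc_last]

end Extend

lemma sum_pi_fin_succ_eq_sum_snoc {α M : Type*} [Fintype α] [AddCommMonoid M] {n : ℕ}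
    (f : (Fin (n + 1) → α) → M) :
    ∑ σ, f σ = ∑ a, ∑ τ : Fin n → α, f (Fin.snoc τ a) :=
  (Fintype.sum_equiv (Fin.snocEquiv fun _ => α) _ f fun _ => rfl).symm.trans
    (Fintype.sum_prod_type _)

lemma sum_ite_exists_div_card_le_iSup {κ ι : Type*} [Finite κ] [Fintype ι] (s : Finset κ)
    (r : κ → ι → Prop) [∀ β i, Decidable (r β i)] (f : ι → ℝ) (hf : ∀ i, 0 ≤ f i) :
    (∑ i, if ∃ β ∈ s, r β i then f i else 0) / s.card ≤
      ⨆ β, ∑ i, if r β i then f i else 0 := by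
  have h_term_nonneg : ∀ β i, 0 ≤ if r β i then f i else 0 := fun β i => ite_nonneg (hf i) le_rfl
  have h_exists_le : ∀ i,
      (if ∃ β ∈ s, r β i then f i else 0) ≤ ∑ β ∈ s, if r β i then f i else 0 := by
    intro i
    split_ifs with h
    · obtain ⟨β, hβ, hr⟩ := h
      calc f i = if r β i then f i else 0 := (if_pos hr).symm
        _ ≤ _ := Finset.single_le_sum (fun β _ => h_term_nonneg β i) hβ
    · exact Finset.sum_nonneg fun β _ => h_term_nonneg β i
  refine div_le_of_le_mul₀ s.card.cast_nonneg
    (Real.iSup_nonneg fun β => Finset.sum_nonneg fun i _ => h_term_nonneg β i) ?_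
  calc (∑ i, if ∃ β ∈ s, r β i then f i else 0)
      ≤ ∑ i, ∑ β ∈ s, if r β i then f i else 0 := Finset.sum_le_sum fun i _ => h_exists_le i
    _ = ∑ β ∈ s, ∑ i, if r β i then f i else 0 := Finset.sum_comm
    _ ≤ ∑ _β ∈ s, ⨆ β, ∑ i, if r β i then f i else 0 :=
      Finset.sum_le_sum fun β _ =>
        le_ciSup (f := fun β => ∑ i, if r β i then f i else 0) (Set.finite_range _).bddAbove β
    _ = _ := by rw [Finset.sum_const, nsmul_eq_mul, mul_comm]

def wordWeight (O : Word E → Op Λ) (μ : ℝ) (w : Word E) : ℝ :=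
  opNorm (O w) * Real.exp (μ * (w.S.card : ℝ))

lemma wordWeight_nonneg (O : Word E → Op Λ) (μ : ℝ) (w : Word E) : 0 ≤ wordWeight O μ w :=
  mul_nonneg (norm_nonneg _) (Real.exp_pos _).le

lemma wordNorm_eq_iSup (μ : ℝ) (O : Word E → Op Λ) :
    wordNorm μ O = ⨆ α, ∑ w, if α ∈ w.S then wordWeight O μ w else 0 := rfl

lemma sum_le_wordNorm (μ : ℝ) (O : Word E → Op Λ) (α : E) :
    (∑ w, if α ∈ w.S then wordWeight O μ w else 0) ≤ wordNorm μ O := by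
  rw [wordNorm_eq_iSup]
  exact le_ciSup (f := fun α => ∑ w, if α ∈ w.S then wordWeight O μ w else 0)
    (Set.finite_range _).bddAbove α

lemma sum_ite_exists_div_card_le_wordNorm (μ : ℝ) (O : Word E → Op Λ) (s : Finset E) :
    (∑ w, if ∃ β ∈ s, β ∈ w.S then wordWeight O μ w else 0) / s.card ≤ wordNorm μ O := by
  rw [wordNorm_eq_iSup]
  exact sum_ite_exists_div_card_le_iSup s _ _ (wordWeight_nonneg O μ)

lemma wordNorm_nonneg (μ : ℝ) (O : Word E → Op Λ) : 0 ≤ wordNorm μ O :=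
  Real.iSup_nonneg fun _ => Finset.sum_nonneg fun w _ => ite_nonneg (wordWeight_nonneg O μ w) le_rfl

section Weights

variable (B : ℕ → Word E → Op Λ) (μ : ℝ)

lemma zw13_nonneg (σ : ℕ → Word E) (k : ℕ) : 0 ≤ zw13 B μ σ k :=
  mul_nonneg (pow_nonneg (by positivity) _)
    (Finset.prod_nonneg fun i _ => wordWeight_nonneg (B i) μ (σ i))

lemma zw13_eq (σ : ℕ → Word E) (k : ℕ) :
    zw13 B μ σ k = (1 / ((sprime σ k).S.card : ℝ)) ^ (k + 1) *
      ∏ i ∈ Finset.range (k + 1), wordWeight (B i) μ (σ i) := rfl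

lemma zw13_zero_le (σ : ℕ → Word E) : zw13 B μ σ 0 ≤ wordWeight (B 0) μ (σ 0) := by
  rw [zw13, Finset.prod_range_one, pow_one, sprime, one_div]
  exact mul_le_of_le_one_left (wordWeight_nonneg (B 0) μ (σ 0)) (Nat.cast_inv_le_one _)

lemma zw13_succ_le {σ : ℕ → Word E} {k : ℕ} (hmul : MulDef (σ (k + 1)) (sprime σ k))
    (hne : (sprime σ k).S.Nonempty) :
    zw13 B μ σ (k + 1) ≤
      wordWeight (B (k + 1)) μ (σ (k + 1)) / ((σ (k + 1)).S ∪ (sprime σ k).S).card *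
        zw13 B μ σ k := by
  have h_pos : (0 : ℝ) < (sprime σ k).S.card := by exact_mod_cast hne.card_pos
  have h_le : ((sprime σ k).S.card : ℝ) ≤ ((σ (k + 1)).S ∪ (sprime σ k).S).card := by
    exact_mod_cast Finset.card_le_card Finset.subset_union_right
  have h_prod := Finset.prod_nonneg fun i (_ : i ∈ Finset.range (k + 1)) =>
    wordWeight_nonneg (B i) μ (σ i)
  have h_w := wordWeight_nonneg (B (k + 1)) μ (σ (k + 1))
  rw [zw13_eq, zw13_eq, sprime, wmul_S hmul, Finset.prod_range_succ]
  generalize ∏ i ∈ Finset.range (k + 1), wordWeight (B i) μ (σ i) = P at h_prod ⊢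
  calc (1 / (((σ (k + 1)).S ∪ (sprime σ k).S).card : ℝ)) ^ (k + 1 + 1) *
        (P * wordWeight (B (k + 1)) μ (σ (k + 1)))
      = wordWeight (B (k + 1)) μ (σ (k + 1)) / ((σ (k + 1)).S ∪ (sprime σ k).S).card *
          ((1 / (((σ (k + 1)).S ∪ (sprime σ k).S).card : ℝ)) ^ (k + 1) * P) := by ring
    _ ≤ _ := by gcongr

def z13kjTerm (k j : ℕ) (α : E) (σ : Fin (k + 1) → Word E) : ℝ :=
  if goodSeq (extend σ) k ∧ α ∈ (extend σ j).S then zw13 B μ (extend σ) k else 0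

lemma z13kjTerm_nonneg (k j : ℕ) (α : E) (σ : Fin (k + 1) → Word E) :
    0 ≤ z13kjTerm B μ k j α σ :=
  ite_nonneg (zw13_nonneg B μ _ k) le_rfl

lemma z13_nonneg (k : ℕ) : 0 ≤ z13 B μ k :=
  Real.iSup_nonneg fun _ => Finset.sum_nonneg fun _ _ => ite_nonneg (zw13_nonneg B μ _ k) le_rfl

lemma z13kj_nonneg (k j : ℕ) : 0 ≤ z13kj B μ k j :=
  Real.iSup_nonneg fun α => Finset.sum_nonneg fun σ _ => z13kjTerm_nonneg B μ k j α σ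

lemma sum_z13kjTerm_le_z13kj (k j : ℕ) (α : E) :
    ∑ σ, z13kjTerm B μ k j α σ ≤ z13kj B μ k j :=
  le_ciSup (f := fun α => ∑ σ, z13kjTerm B μ k j α σ) (Set.finite_range _).bddAbove α

lemma z13kjTerm_zero_le (α : E) (σ : Fin 1 → Word E) :
    z13kjTerm B μ 0 0 α σ ≤ if α ∈ (σ 0).S then wordWeight (B 0) μ (σ 0) else 0 := by
  have h_extend : extend σ 0 = σ 0 := rfl
  rw [z13kjTerm, h_extend]
  split_ifs with h h'
  · exact zw13_zero_le B μ _
  · exact absurd h.2 h'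
  · exact wordWeight_nonneg (B 0) μ (σ 0)
  · exact le_rfl

lemma zw13_extend_snoc_le {k : ℕ} {τ : Fin (k + 1) → Word E} {w : Word E}
    (hmul : MulDef w (sprime (extend τ) k)) (hne : (sprime (extend τ) k).S.Nonempty) :
    zw13 B μ (extend (Fin.snoc τ w)) (k + 1) ≤
      wordWeight (B (k + 1)) μ w / (w.S ∪ (sprime (extend τ) k).S).card *
        zw13 B μ (extend τ) k := by
  have h := zw13_succ_le B μ (σ := extend (Fin.snoc τ w)) (k := k)
  rw [extend_snoc_last, sprime_congr fun _ => extend_snoc_of_le τ w,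
    zw13_congr B μ fun _ => extend_snoc_of_le τ w] at h
  exact h hmul hne

lemma z13kjTerm_snoc_le {k j : ℕ} (hj : j ≤ k) (α : E) (τ : Fin (k + 1) → Word E)
    (w : Word E) :
    z13kjTerm B μ (k + 1) j α (Fin.snoc τ w) ≤
      z13kjTerm B μ k j α τ *
        ((if ∃ β ∈ (sprime (extend τ) k).S, β ∈ w.S then wordWeight (B (k + 1)) μ w else 0) /
          (sprime (extend τ) k).S.card) := by
  rw [z13kjTerm, z13kjTerm, goodSeq_extend_snoc_iff, extend_snoc_of_le τ w hj]
  by_cases h : (goodSeq (extend τ) k ∧ MulDef w (sprime (extend τ) k) ∧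
      (w.S ∩ (sprime (extend τ) k).S).Nonempty) ∧ α ∈ (extend τ j).S
  · obtain ⟨⟨hτ, hmul, β, hβ⟩, hα⟩ := h
    obtain ⟨hβw, hβS⟩ := Finset.mem_inter.1 hβ
    rw [if_pos ⟨⟨hτ, hmul, β, hβ⟩, hα⟩, if_pos ⟨hτ, hα⟩, if_pos ⟨β, hβS, hβw⟩]
    have h_pos : (0 : ℝ) < (sprime (extend τ) k).S.card := by
      exact_mod_cast Finset.card_pos.2 ⟨β, hβS⟩
    calc zw13 B μ (extend (Fin.snoc τ w)) (k + 1)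
        ≤ wordWeight (B (k + 1)) μ w / (w.S ∪ (sprime (extend τ) k).S).card *
            zw13 B μ (extend τ) k := zw13_extend_snoc_le B μ hmul ⟨β, hβS⟩
      _ ≤ wordWeight (B (k + 1)) μ w / (sprime (extend τ) k).S.card * zw13 B μ (extend τ) k := by
          have h_zw := zw13_nonneg B μ (extend τ) k
          have h_b := wordWeight_nonneg (B (k + 1)) μ w
          gcongr
          exact Finset.subset_union_right
      _ = _ := mul_comm _ _
  · rw [if_neg h]
    exact mul_nonneg (ite_nonneg (zw13_nonneg B μ _ k) le_rfl)
      (div_nonneg (ite_nonneg (wordWeight_nonneg _ μ w) le_rfl) (Nat.cast_nonneg _))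

lemma z13kjTerm_snoc_last_le {m : ℕ} (α : E) (τ : Fin (m + 1) → Word E) (w : Word E) :
    z13kjTerm B μ (m + 1) (m + 1) α (Fin.snoc τ w) ≤
      (if ∃ β ∈ w.S, goodSeq (extend τ) m ∧ β ∈ (sprime (extend τ) m).S
          then zw13 B μ (extend τ) m else 0) / w.S.card *
        (if α ∈ w.S then wordWeight (B (m + 1)) μ w else 0) := by
  rw [z13kjTerm, goodSeq_extend_snoc_iff, extend_snoc_last]
  by_cases h : (goodSeq (extend τ) m ∧ MulDef w (sprime (extend τ) m) ∧
      (w.S ∩ (sprime (extend τ) m).S).Nonempty) ∧ α ∈ w.S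
  · obtain ⟨⟨hτ, hmul, β, hβ⟩, hα⟩ := h
    obtain ⟨hβw, hβS⟩ := Finset.mem_inter.1 hβ
    rw [if_pos ⟨⟨hτ, hmul, β, hβ⟩, hα⟩, if_pos ⟨β, hβw, hτ, hβS⟩, if_pos hα]
    have h_pos : (0 : ℝ) < w.S.card := by exact_mod_cast Finset.card_pos.2 ⟨α, hα⟩
    calc zw13 B μ (extend (Fin.snoc τ w)) (m + 1)
        ≤ wordWeight (B (m + 1)) μ w / (w.S ∪ (sprime (extend τ) m).S).card *
            zw13 B μ (extend τ) m := zw13_extend_snoc_le B μ hmul ⟨β, hβS⟩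
      _ ≤ wordWeight (B (m + 1)) μ w / w.S.card * zw13 B μ (extend τ) m := by
          have h_zw := zw13_nonneg B μ (extend τ) m
          have h_b := wordWeight_nonneg (B (m + 1)) μ w
          gcongr
          exact Finset.subset_union_left
      _ = _ := by ring
  · rw [if_neg h]
    exact mul_nonneg
      (div_nonneg (ite_nonneg (zw13_nonneg B μ _ m) le_rfl) (Nat.cast_nonneg _))
      (ite_nonneg (wordWeight_nonneg _ μ w) le_rfl)

lemma z13kj_zero_zero_le : z13kj B μ 0 0 ≤ wordNorm μ (B 0) := by
  refine Real.iSup_le (fun α => ?_) (wordNorm_nonneg μ (B 0))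
  calc ∑ σ : Fin 1 → Word E, z13kjTerm B μ 0 0 α σ
      ≤ ∑ σ : Fin 1 → Word E, if α ∈ (σ 0).S then wordWeight (B 0) μ (σ 0) else 0 :=
        Finset.sum_le_sum fun σ _ => z13kjTerm_zero_le B μ α σ
    _ = ∑ w, if α ∈ w.S then wordWeight (B 0) μ w else 0 :=
        Fintype.sum_equiv (Equiv.funUnique (Fin 1) (Word E)) _ _ fun _ => rfl
    _ ≤ wordNorm μ (B 0) := sum_le_wordNorm μ (B 0) α

lemma z13kj_succ_self_le (m : ℕ) :
    z13kj B μ (m + 1) (m + 1) ≤ z13 B μ m * wordNorm μ (B (m + 1)) := by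
  refine Real.iSup_le (fun α => ?_) (mul_nonneg (z13_nonneg B μ m) (wordNorm_nonneg μ _))
  calc ∑ σ, z13kjTerm B μ (m + 1) (m + 1) α σ
      = ∑ w, ∑ τ, z13kjTerm B μ (m + 1) (m + 1) α (Fin.snoc τ w) :=
        sum_pi_fin_succ_eq_sum_snoc _
    _ ≤ ∑ w, ∑ τ : Fin (m + 1) → Word E,
          (if ∃ β ∈ w.S, goodSeq (extend τ) m ∧ β ∈ (sprime (extend τ) m).S
            then zw13 B μ (extend τ) m else 0) / w.S.card *
          (if α ∈ w.S then wordWeight (B (m + 1)) μ w else 0) :=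
        Finset.sum_le_sum fun w _ => Finset.sum_le_sum fun τ _ => z13kjTerm_snoc_last_le B μ α τ w
    _ = ∑ w, (∑ τ : Fin (m + 1) → Word E,
          if ∃ β ∈ w.S, goodSeq (extend τ) m ∧ β ∈ (sprime (extend τ) m).S
            then zw13 B μ (extend τ) m else 0) / w.S.card *
          (if α ∈ w.S then wordWeight (B (m + 1)) μ w else 0) := by
        simp only [Finset.sum_div, Finset.sum_mul]
    _ ≤ ∑ w, z13 B μ m * (if α ∈ w.S then wordWeight (B (m + 1)) μ w else 0) :=
        Finset.sum_le_sum fun w _ => mul_le_mul_of_nonneg_right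
          (sum_ite_exists_div_card_le_iSup w.S
            (fun β τ => goodSeq (extend τ) m ∧ β ∈ (sprime (extend τ) m).S)
            (fun τ => zw13 B μ (extend τ) m) fun τ => zw13_nonneg B μ (extend τ) m)
          (ite_nonneg (wordWeight_nonneg _ μ w) le_rfl)
    _ = z13 B μ m * ∑ w, if α ∈ w.S then wordWeight (B (m + 1)) μ w else 0 :=
        (Finset.mul_sum ..).symm
    _ ≤ z13 B μ m * wordNorm μ (B (m + 1)) :=
        mul_le_mul_of_nonneg_left (sum_le_wordNorm μ _ α) (z13_nonneg B μ m)

lemma z13kj_succ_le {k j : ℕ} (hj : j ≤ k) :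
    z13kj B μ (k + 1) j ≤ z13kj B μ k j * wordNorm μ (B (k + 1)) := by
  refine Real.iSup_le (fun α => ?_) (mul_nonneg (z13kj_nonneg B μ k j) (wordNorm_nonneg μ _))
  calc ∑ σ, z13kjTerm B μ (k + 1) j α σ
      = ∑ w, ∑ τ, z13kjTerm B μ (k + 1) j α (Fin.snoc τ w) := sum_pi_fin_succ_eq_sum_snoc _
    _ ≤ ∑ w, ∑ τ, z13kjTerm B μ k j α τ *
          ((if ∃ β ∈ (sprime (extend τ) k).S, β ∈ w.S then wordWeight (B (k + 1)) μ w else 0) /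
            (sprime (extend τ) k).S.card) :=
        Finset.sum_le_sum fun w _ => Finset.sum_le_sum fun τ _ => z13kjTerm_snoc_le B μ hj α τ w
    _ = ∑ τ, z13kjTerm B μ k j α τ *
          ((∑ w, if ∃ β ∈ (sprime (extend τ) k).S, β ∈ w.S
              then wordWeight (B (k + 1)) μ w else 0) / (sprime (extend τ) k).S.card) := by
        rw [Finset.sum_comm]
        simp only [Finset.sum_div, Finset.mul_sum]
    _ ≤ ∑ τ, z13kjTerm B μ k j α τ * wordNorm μ (B (k + 1)) :=
        Finset.sum_le_sum fun τ _ => mul_le_mul_of_nonneg_left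
          (sum_ite_exists_div_card_le_wordNorm μ (B (k + 1)) _)
          (z13kjTerm_nonneg B μ k j α τ)
    _ = (∑ τ, z13kjTerm B μ k j α τ) * wordNorm μ (B (k + 1)) := (Finset.sum_mul ..).symm
    _ ≤ z13kj B μ k j * wordNorm μ (B (k + 1)) :=
        mul_le_mul_of_nonneg_right (sum_z13kjTerm_le_z13kj B μ k j α) (wordNorm_nonneg μ _)

end Weights

theorem commutator_combinatorial_bound_general (B : ℕ → Word E → Op Λ)
    (μ : ℝ) (k j : ℕ) (hj : j ≤ k) :
    z13kj B μ k j ≤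
      (if j = 0 then 1 else z13 B μ (j - 1)) * ∏ t ∈ Finset.Icc j k, wordNorm μ (B t) := by
  induction k, hj using Nat.le_induction with
  | base =>
    rcases j with _ | m
    · simpa using z13kj_zero_zero_le B μ
    · simpa using z13kj_succ_self_le B μ m
  | succ k hjk ih =>
    rw [Finset.prod_Icc_succ_top (hjk.trans k.le_succ), ← mul_assoc]
    exact (z13kj_succ_le B μ hjk).trans (mul_le_mul_of_nonneg_right ih (wordNorm_nonneg μ _))

/-- **Combinatorial lemma for the iterated-commutator expansion.**
For all `j = 0,…,k`: `z_{k,j} ≤ z(j−1) ∏_{t=j}^k ‖Bᵗ‖_μ`, where `z(−1) = 1`. -/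
theorem commutator_combinatorial_bound (K : Checks Λ E) (B : ℕ → Word E → Op Λ)
    (hB : ∀ t, IsColl K (B t)) (μ : ℝ) (hμ : 0 < μ) (k j : ℕ) (hj : j ≤ k) :
    z13kj B μ k j ≤
      (if j = 0 then 1 else z13 B μ (j - 1)) * ∏ t ∈ Finset.Icc j k, wordNorm μ (B t) :=
  commutator_combinatorial_bound_general B μ k j hj

end Stmt13

end QLDPC
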